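/- Let K be a field of characteristic zero, L a Lie algebra over K, H a Lie subalgebra of L, α a root, and e ∈ L_α, f ∈ L_{−α} such that (h,e,f) is an sl₂-triple with h = ⁅e,f⁆ ∈ H. Let M be an L-module on which e and f act nilpotently, and let θ_M = exp(e_M) ∘ exp((−f)_M) ∘ exp(e_M), where x_M denotes the action of x on M. Then for every linear functional ν on H, θ_M maps the weight space M_ν = {m ∈ M : h'·m = ν(h')•m for all h' ∈ H} bijectively onto the weight space M_{ν − ν(h)α}. -/

import Mathlib

/-- For a linear functional `α` on a Lie subalgebra `H` of `L`, the root space `L_α` is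
`{x ∈ L : ⁅h, x⁆ = α h • x for all h ∈ H}`. -/
def rootSpace' {K L : Type*} [Field K] [LieRing L] [LieAlgebra K L]
    (H : LieSubalgebra K L) (α : Module.Dual K H) : Submodule K L :=
  ⨅ h : H, Module.End.eigenspace (LieAlgebra.ad K L (h : L)) (α h)

/-- `α` is a root of `(L, H)` if it is a nonzero functional with nonzero root space. -/
def IsRoot' {K L : Type*} [Field K] [LieRing L] [LieAlgebra K L]
    (H : LieSubalgebra K L) (α : Module.Dual K H) : Prop :=
  α ≠ 0 ∧ rootSpace' H α ≠ ⊥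

/-- For a linear functional `ν` on a Lie subalgebra `H` of `L` and an `L`-module `M`,
the weight space `M_ν` is `{m ∈ M : h • m = ν h • m for all h ∈ H}`. -/
def weightSpace' {K L : Type*} [Field K] [LieRing L] [LieAlgebra K L]
    (H : LieSubalgebra K L) (M : Type*) [AddCommGroup M] [Module K M]
    [LieRingModule L M] [LieModule K L M] (ν : Module.Dual K H) : Submodule K M :=
  ⨅ h : H, Module.End.eigenspace (LieModule.toEnd K L M (h : L)) (ν h)

/-- The exponential `exp D = Σₙ Dⁿ/n!` of an endomorphism `D`.  For a nilpotent `D` this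
is the usual exponential, since the sum ranges over all `n` with `D ^ n ≠ 0`
(`D ^ n = 0` whenever `n ≥ nilpotencyClass D`). -/
noncomputable def expEnd {K M : Type*} [Field K] [AddCommGroup M] [Module K M]
    (D : Module.End K M) : Module.End K M :=
  ∑ n ∈ Finset.range (nilpotencyClass D + 1), (n.factorial : K)⁻¹ • D ^ n



/-! Write `E, F, Hh` for the actions of `e, f, h` on `M`, so `θ = exp E · exp (-F) · exp E`.
In an associative `ℚ`-algebra, `a · exp d = exp d · (a + ⁅a, d⁆ + ½ ⁅⁅a, d⁆, d⁆)` whenever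
`⁅⁅⁅a, d⁆, d⁆, d⁆ = 0`; with the `sl₂`-relations this gives `Hh θ = -θ Hh`. Since `α h = 2`,
every `h' ∈ H` is `z + (α h' / 2) • h` with `z` centralising `e` and `f`, hence `θ`; so
`h' θ = θ (h' - α h' • h)` on `M`, and `θ` maps `M_ν` into `M_{ν - ν(h) α}`. The inverse
`exp (-E) · exp F · exp (-E)` comes from the triple `(h, -e, -f)` and maps back, because
`ν ↦ ν - ν(h) α` is an involution. -/

section

attribute [local instance] LieRing.ofAssociativeRing

variable {A : Type*} [Ring A] [Algebra ℚ A]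

namespace IsNilpotent

theorem exp_mulLeft {c : A} (hc : IsNilpotent c) :
    exp (LinearMap.mulLeft ℚ c) = LinearMap.mulLeft ℚ (exp c) :=
  (map_exp hc (Algebra.lmul ℚ A)).symm

theorem exp_mulRight {c : A} (hc : IsNilpotent c) :
    exp (LinearMap.mulRight ℚ c) = LinearMap.mulRight ℚ (exp c) := by
  obtain ⟨k, hk⟩ := hc
  have hk' : LinearMap.mulRight ℚ c ^ k = 0 := by
    rw [LinearMap.pow_mulRight, hk, LinearMap.mulRight_zero_eq_zero]
  ext x
  simp [exp_eq_sum hk, exp_eq_sum hk', LinearMap.pow_mulRight, Finset.mul_sum]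

theorem exp_mul_mul_exp_neg {d : A} (hd : IsNilpotent d) (a : A) :
    exp d * a * exp (-d) = exp (LieAlgebra.ad ℚ A d) a := by
  have had : LieAlgebra.ad ℚ A d = LinearMap.mulLeft ℚ d + LinearMap.mulRight ℚ (-d) := by
    ext x; simp [Ring.lie_def, sub_eq_add_neg]
  rw [had, exp_add_of_commute (LinearMap.commute_mulLeft_right d (-d))
      ((LinearMap.isNilpotent_mulLeft_iff ℚ d).2 hd)
      ((LinearMap.isNilpotent_mulRight_iff ℚ (-d)).2 hd.neg),
    exp_mulLeft hd, exp_mulRight hd.neg, Module.End.mul_apply, LinearMap.mulRight_apply,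
    LinearMap.mulLeft_apply, mul_assoc]

theorem mul_exp_eq_exp_mul {d a : A} (hd : IsNilpotent d) (h3 : ⁅⁅⁅a, d⁆, d⁆, d⁆ = 0) :
    a * exp d = exp d * (a + ⁅a, d⁆ + (2 : ℚ)⁻¹ • ⁅⁅a, d⁆, d⁆) := by
  set T := LieAlgebra.ad ℚ A (-d)
  have hT : ∀ x, T x = ⁅x, d⁆ := fun x => by
    rw [LieAlgebra.ad_apply, neg_lie, ← lie_skew, neg_neg]
  have hT3 : (T ^ 3) • a = 0 := by
    simp only [Module.End.smul_def, pow_three, Module.End.mul_apply, hT, h3]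
  have hsum := exp_smul_eq_sum hT3 (LieAlgebra.ad_nilpotent_of_nilpotent hd.neg)
  calc a * exp d = exp d * (exp (-d) * a * exp (-(-d))) := by
        rw [neg_neg, ← mul_assoc, ← mul_assoc, exp_mul_exp_neg_self hd, one_mul]
    _ = _ := by
        rw [exp_mul_mul_exp_neg hd.neg, ← Module.End.smul_def, hsum]
        rw [Finset.sum_range_succ, Finset.sum_range_succ, Finset.sum_range_one]
        simp only [Module.End.smul_def, pow_zero, pow_one, sq, Module.End.mul_apply,
          hT, Nat.factorial_zero, Nat.factorial_one, Nat.factorial_two,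
          Nat.cast_one, Nat.cast_ofNat, inv_one, one_smul]

theorem commute_exp_right {a d : A} (h : Commute a d) : Commute a (exp d) :=
  Commute.sum_right _ _ _ fun i _ => (h.pow_right i).smul_right _

end IsNilpotent

open IsNilpotent

noncomputable def weylElement (e f : A) : A := exp e * exp (-f) * exp e

theorem weylElement_mul_weylElement_neg {e f : A} (he : IsNilpotent e) (hf : IsNilpotent f) :
    weylElement e f * weylElement (-e) (-f) = 1 := by
  simp only [weylElement, neg_neg, mul_assoc]
  rw [← mul_assoc (exp e) (exp (-e)), exp_mul_exp_neg_self he, one_mul,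
    ← mul_assoc (exp (-f)) (exp f), exp_neg_mul_exp_self hf, one_mul, exp_mul_exp_neg_self he]

theorem commute_weylElement {z e f : A} (he : Commute z e) (hf : Commute z f) :
    Commute z (weylElement e f) :=
  ((commute_exp_right he).mul_right (commute_exp_right hf.neg_right)).mul_right
    (commute_exp_right he)

theorem mul_weylElement {e f h : A} (he : IsNilpotent e) (hf : IsNilpotent f)
    (hef : ⁅e, f⁆ = h) (hhe : ⁅h, e⁆ = 2 • e) (hhf : ⁅h, f⁆ = -(2 • f)) :
    h * weylElement e f = -(weylElement e f * h) := by
  have hX₁ : h * exp e = exp e * (h + 2 • e) := by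
    have := mul_exp_eq_exp_mul (a := h) he (by rw [hhe, nsmul_lie, lie_self, nsmul_zero, zero_lie])
    rwa [hhe, nsmul_lie, lie_self, nsmul_zero, smul_zero, add_zero] at this
  have hX₂ : e * exp e = exp e * e := commute_exp_right (Commute.refl e)
  have hY₁ : h * exp (-f) = exp (-f) * (h + 2 • f) := by
    have hhf' : ⁅h, -f⁆ = 2 • f := by rw [lie_neg, hhf, neg_neg]
    have := mul_exp_eq_exp_mul (a := h) hf.neg
      (by simp only [hhf', nsmul_lie, lie_neg, lie_self, neg_zero, nsmul_zero, zero_lie])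
    simpa only [hhf', nsmul_lie, lie_neg, lie_self, neg_zero, nsmul_zero, smul_zero, add_zero]
      using this
  have hY₂ : e * exp (-f) = exp (-f) * (e - h - f) := by
    have hef' : ⁅e, -f⁆ = -h := by rw [lie_neg, hef]
    have hhf' : ⁅-h, -f⁆ = -(2 • f) := by rw [neg_lie, lie_neg, neg_neg, hhf]
    have := mul_exp_eq_exp_mul (a := e) hf.neg
      (by simp only [hef', hhf', neg_lie, nsmul_lie, lie_neg, lie_self, neg_zero, nsmul_zero])
    rw [this, hef', hhf']
    congr 1
    module
  calc h * weylElement e f = exp e * ((h + 2 • e) * exp (-f)) * exp e := by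
        simp only [weylElement, ← mul_assoc, hX₁]
    _ = exp e * exp (-f) * ((2 • e - h) * exp e) := by
        rw [add_mul, smul_mul_assoc, hY₁, hY₂]
        noncomm_ring
    _ = -(weylElement e f * h) := by
        rw [sub_mul, smul_mul_assoc, hX₂, hX₁, weylElement]
        noncomm_ring

end

/-- `IsNilpotent.exp` needs a `ℚ`-algebra, and Mathlib puts none on `Module.End K M`. -/
noncomputable abbrev Module.End.ratAlgebra (K M : Type*) [Field K] [CharZero K] [AddCommGroup M]
    [Module K M] : Algebra ℚ (Module.End K M) :=
  Algebra.compHom _ (algebraMap ℚ K)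

section RootSpaces

open LieModule

variable {K L : Type*} [Field K] [LieRing L] [LieAlgebra K L] {H : LieSubalgebra K L}
  {M : Type*} [AddCommGroup M] [Module K M] [LieRingModule L M] [LieModule K L M]

theorem mem_rootSpace'_iff {α : Module.Dual K H} {x : L} :
    x ∈ rootSpace' H α ↔ ∀ h : H, ⁅(h : L), x⁆ = α h • x := by
  simp only [rootSpace', Submodule.mem_iInf, Module.End.mem_eigenspace_iff, LieAlgebra.ad_apply]

theorem mem_weightSpace'_iff {ν : Module.Dual K H} {m : M} :
    m ∈ weightSpace' H M ν ↔ ∀ h : H, ⁅(h : L), m⁆ = ν h • m := by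
  simp only [weightSpace', Submodule.mem_iInf, Module.End.mem_eigenspace_iff,
    LieModule.toEnd_apply_apply]

theorem apply_eq_of_mem_rootSpace' {α : Module.Dual K H} {x : L} (hx : x ∈ rootSpace' H α)
    (hx₀ : x ≠ 0) {h : H} {c : K} (hc : ⁅(h : L), x⁆ = c • x) : α h = c :=
  smul_left_injective K hx₀ ((mem_rootSpace'_iff.1 hx h).symm.trans hc)

theorem lie_sub_smul_eq_zero_of_mem_rootSpace' {β : Module.Dual K H} {x : L}
    (hx : x ∈ rootSpace' H β) {h : H} (hβ : β h ≠ 0) (h' : H) :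
    ⁅(h' : L) - (β h' / β h) • (h : L), x⁆ = 0 := by
  rw [sub_lie, smul_lie, mem_rootSpace'_iff.1 hx, mem_rootSpace'_iff.1 hx, smul_smul,
    div_mul_cancel₀ _ hβ, sub_self]

theorem mapsTo_weightSpace' {θ : Module.End K M} {α : Module.Dual K H} {h : H}
    (hθ : ∀ h' : H, toEnd K L M h' * θ = θ * (toEnd K L M h' - α h' • toEnd K L M h))
    (ν : Module.Dual K H) :
    Set.MapsTo θ (weightSpace' H M ν) (weightSpace' H M (ν - ν h • α)) := by
  intro m hm
  rw [SetLike.mem_coe, mem_weightSpace'_iff] at hm ⊢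
  intro h'
  calc ⁅(h' : L), θ m⁆ = θ (⁅(h' : L), m⁆ - α h' • ⁅(h : L), m⁆) := by
        simpa using LinearMap.congr_fun (hθ h') m
    _ = (ν - ν h • α) h' • θ m := by
        rw [hm h', hm h, smul_smul, ← sub_smul, map_smul]
        simp [mul_comm]

theorem bijOn_weightSpace' {θ θ' : Module.End K M} {α : Module.Dual K H} {h : H}
    (hα : α h = 2) (hθθ' : θ * θ' = 1) (hθ'θ : θ' * θ = 1)
    (hθ : ∀ h' : H, toEnd K L M h' * θ = θ * (toEnd K L M h' - α h' • toEnd K L M h))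
    (hθ' : ∀ h' : H, toEnd K L M h' * θ' = θ' * (toEnd K L M h' - α h' • toEnd K L M h))
    (ν : Module.Dual K H) :
    Set.BijOn θ (weightSpace' H M ν) (weightSpace' H M (ν - ν h • α)) := by
  have hν : ν - ν h • α - (ν - ν h • α) h • α = ν := by
    rw [LinearMap.sub_apply, LinearMap.smul_apply, hα, smul_eq_mul]
    module
  refine Set.InvOn.bijOn ⟨fun m _ => ?_, fun m _ => ?_⟩ (mapsTo_weightSpace' hθ ν)
    (hν ▸ mapsTo_weightSpace' hθ' _)
  · rw [← Module.End.mul_apply, hθ'θ, Module.End.one_apply]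
  · rw [← Module.End.mul_apply, hθθ', Module.End.one_apply]

end RootSpaces

section WeylElement

attribute [local instance] LieRing.ofAssociativeRing Module.End.ratAlgebra

open IsNilpotent LieModule

variable {K : Type*} [Field K] [CharZero K]

theorem expEnd_eq_exp {M : Type*} [AddCommGroup M] [Module K M] {D : Module.End K M}
    (hD : IsNilpotent D) : expEnd D = exp D := by
  rw [expEnd, exp_eq_sum (pow_eq_zero_of_le (Nat.le_succ _) (pow_nilpotencyClass hD))]
  refine Finset.sum_congr rfl fun n _ => ?_
  show _ = algebraMap ℚ K (n.factorial : ℚ)⁻¹ • D ^ n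
  rw [map_inv₀, map_natCast]

variable {L : Type*} [LieRing L] [LieAlgebra K L] {H : LieSubalgebra K L}
  {M : Type*} [AddCommGroup M] [Module K M] [LieRingModule L M] [LieModule K L M]

theorem toEnd_mul_weylElement {α : Module.Dual K H} {e f : L} (he : e ∈ rootSpace' H α)
    (hf : f ∈ rootSpace' H (-α)) {h : H} (hα : α h = 2) (hef : ⁅e, f⁆ = (h : L))
    (hnile : IsNilpotent (toEnd K L M e)) (hnilf : IsNilpotent (toEnd K L M f)) (h' : H) :
    toEnd K L M h' * weylElement (toEnd K L M e) (toEnd K L M f) =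
      weylElement (toEnd K L M e) (toEnd K L M f) * (toEnd K L M h' - α h' • toEnd K L M h) := by
  set θ := weylElement (toEnd K L M e) (toEnd K L M f)
  have hα₀ : α h ≠ 0 := by rw [hα]; exact two_ne_zero
  set c := α h' / α h
  set z := (h' : L) - c • (h : L)
  have hze : ⁅z, e⁆ = 0 := lie_sub_smul_eq_zero_of_mem_rootSpace' he hα₀ h'
  have hzf : ⁅z, f⁆ = 0 := by
    have := lie_sub_smul_eq_zero_of_mem_rootSpace' hf
      (by rwa [LinearMap.neg_apply, neg_ne_zero]) h'
    rwa [LinearMap.neg_apply, LinearMap.neg_apply, neg_div_neg_eq] at this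
  have hcomm : Commute (toEnd K L M z) θ := by
    refine commute_weylElement (commute_iff_lie_eq.2 ?_) (commute_iff_lie_eq.2 ?_)
    · rw [← LieHom.map_lie, hze, map_zero]
    · rw [← LieHom.map_lie, hzf, map_zero]
  have hh : toEnd K L M h * θ = -(θ * toEnd K L M h) := by
    refine mul_weylElement hnile hnilf ?_ ?_ ?_
    · rw [← LieHom.map_lie, hef]
    · rw [← LieHom.map_lie, mem_rootSpace'_iff.1 he h, hα, map_smul, two_smul, two_nsmul]
    · rw [← LieHom.map_lie, mem_rootSpace'_iff.1 hf h, LinearMap.neg_apply, hα, map_smul,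
        neg_smul, two_smul, two_nsmul]
  have hh' : toEnd K L M h' = toEnd K L M z + c • toEnd K L M h := by
    rw [map_sub, map_smul, sub_add_cancel]
  have hαc : α h' = 2 * c := by rw [← hα, mul_div_cancel₀ _ hα₀]
  rw [hh', add_mul, hcomm.eq, smul_mul_assoc, hh, hαc, mul_sub, mul_add, mul_smul_comm,
    mul_smul_comm]
  module

end WeylElement

theorem weyl_element_maps_weight_spaces_general
    {K L : Type*} [Field K] [CharZero K] [LieRing L] [LieAlgebra K L]
    (H : LieSubalgebra K L)
    (α : Module.Dual K H)
    (e f : L) (hmeme : e ∈ rootSpace' H α) (hmemf : f ∈ rootSpace' H (-α))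
    (h : H) (hef : ⁅e, f⁆ = (h : L)) (he : e ≠ 0)
    (hhe : ⁅(h : L), e⁆ = (2 : K) • e)
    (M : Type*) [AddCommGroup M] [Module K M] [LieRingModule L M] [LieModule K L M]
    (hnile : IsNilpotent (LieModule.toEnd K L M e))
    (hnilf : IsNilpotent (LieModule.toEnd K L M f))
    (θM : Module.End K M)
    (hθM : θM = expEnd (LieModule.toEnd K L M e) * expEnd (LieModule.toEnd K L M (-f)) *
      expEnd (LieModule.toEnd K L M e))
    (ν : Module.Dual K H) :
    Set.BijOn θM (weightSpace' H M ν) (weightSpace' H M (ν - ν h • α)) := by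
  let := Module.End.ratAlgebra K M
  set toEnd := LieModule.toEnd K L M
  have hα : α h = 2 := apply_eq_of_mem_rootSpace' hmeme he hhe
  have hnile' : IsNilpotent (toEnd (-e)) := by rw [map_neg]; exact hnile.neg
  have hnilf' : IsNilpotent (toEnd (-f)) := by rw [map_neg]; exact hnilf.neg
  have hθ : θM = weylElement (toEnd e) (toEnd f) := by
    rw [hθM, expEnd_eq_exp hnile, expEnd_eq_exp hnilf', map_neg]
    rfl
  subst hθ
  refine bijOn_weightSpace' hα (θ' := weylElement (toEnd (-e)) (toEnd (-f))) ?_ ?_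
    (toEnd_mul_weylElement hmeme hmemf hα hef hnile hnilf)
    (toEnd_mul_weylElement (neg_mem hmeme) (neg_mem hmemf) hα
      (by rw [neg_lie, lie_neg, neg_neg, hef]) hnile' hnilf') ν
  · simpa only [map_neg] using weylElement_mul_weylElement_neg hnile hnilf
  · simpa only [map_neg, neg_neg] using weylElement_mul_weylElement_neg hnile.neg hnilf.neg

/-- Let `K` be a field of characteristic zero, `L` a Lie algebra over `K`, `H` a Lie
subalgebra, `α` a root, `e ∈ L_α`, `f ∈ L_{−α}` with `(h, e, f)` an `sl₂`-triple where
`h = ⁅e, f⁆ ∈ H`.  Let `M` be an `L`-module on which `e` and `f` act nilpotently and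
`θ_M = exp(e_M) ∘ exp((−f)_M) ∘ exp(e_M)`.  Then for every linear functional `ν` on `H`,
`θ_M` maps the weight space `M_ν` bijectively onto the weight space `M_{ν − ν(h)α}`. -/
theorem weyl_element_maps_weight_spaces
    {K L : Type*} [Field K] [CharZero K] [LieRing L] [LieAlgebra K L]
    (H : LieSubalgebra K L)
    (α : Module.Dual K H) (hroot : IsRoot' H α)
    (e f : L) (hmeme : e ∈ rootSpace' H α) (hmemf : f ∈ rootSpace' H (-α))
    (h : H) (hef : ⁅e, f⁆ = (h : L)) (he : e ≠ 0) (hf : f ≠ 0)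
    (hhe : ⁅(h : L), e⁆ = (2 : K) • e) (hhf : ⁅(h : L), f⁆ = (-2 : K) • f)
    (M : Type*) [AddCommGroup M] [Module K M] [LieRingModule L M] [LieModule K L M]
    (hnile : IsNilpotent (LieModule.toEnd K L M e))
    (hnilf : IsNilpotent (LieModule.toEnd K L M f))
    (θM : Module.End K M)
    (hθM : θM = expEnd (LieModule.toEnd K L M e) * expEnd (LieModule.toEnd K L M (-f)) *
      expEnd (LieModule.toEnd K L M e))
    (ν : Module.Dual K H) :
    Set.BijOn θM (weightSpace' H M ν) (weightSpace' H M (ν - ν h • α)) :=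
  weyl_element_maps_weight_spaces_general H α e f hmeme hmemf h hef he hhe M hnile hnilf θM hθM ν
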